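/- Let (Λ,d) be a k-graph satisfying the standing assumption (★). Then the restriction map π : Λ^Δ → Λ^Ω, π(x)(m,n) = x(m,n) for (m,n) ∈ Ω, is a continuous, open surjection (with respect to the cylinder-set topologies on Λ^Δ and Λ^Ω), and π ∘ σ^p = σ^p ∘ π for every p ∈ ℕ^k. -/

import Mathlib

open scoped Classical
open TopologicalSpace MeasureTheory

/-- A `k`-graph: a countable small category with a degree functor to `ℕ^k`
satisfying the unique factorisation property.  Objects are identified with
the degree-zero morphisms. -/
structure KGraph (k : ℕ) where
  Mor : Type
  countable : Countable Mor
  src : Mor → Mor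
  rng : Mor → Mor
  deg : Mor → Fin k → ℕ
  comp : (lam mu : Mor) → src lam = rng mu → Mor
  deg_src : ∀ lam, deg (src lam) = 0
  deg_rng : ∀ lam, deg (rng lam) = 0
  src_obj : ∀ v, deg v = 0 → src v = v
  rng_obj : ∀ v, deg v = 0 → rng v = v
  src_comp : ∀ lam mu h, src (comp lam mu h) = src mu
  rng_comp : ∀ lam mu h, rng (comp lam mu h) = rng lam
  deg_comp : ∀ lam mu h, deg (comp lam mu h) = deg lam + deg mu
  id_comp : ∀ lam (h : src (rng lam) = rng lam), comp (rng lam) lam h = lam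
  comp_id : ∀ lam (h : src lam = rng (src lam)), comp lam (src lam) h = lam
  assoc : ∀ l m n (h1 : src l = rng m) (h2 : src m = rng n)
      (h3 : src (comp l m h1) = rng n) (h4 : src l = rng (comp m n h2)),
      comp (comp l m h1) n h3 = comp l (comp m n h2) h4
  factor : ∀ lam (n1 n2 : Fin k → ℕ), deg lam = n1 + n2 →
      ∃! p : Mor × Mor, deg p.1 = n1 ∧ deg p.2 = n2 ∧
        ∃ h : src p.1 = rng p.2, comp p.1 p.2 h = lam

namespace KGraph

variable {k : ℕ}

/-- The vertices (objects) of a `k`-graph are the degree-zero morphisms. -/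
def IsVertex (Λ : KGraph k) (v : Λ.Mor) : Prop := Λ.deg v = 0

/-- Standing assumption (★): for each `p ∈ ℕ^k` the restrictions of `r` and `s`
to `Λ^p` are surjective (onto the vertices) and finite-to-one. -/
def Star (Λ : KGraph k) : Prop :=
  ∀ p : Fin k → ℕ,
    (∀ v, Λ.IsVertex v →
      (∃ lam, Λ.deg lam = p ∧ Λ.rng lam = v) ∧
      (∃ lam, Λ.deg lam = p ∧ Λ.src lam = v)) ∧
    (∀ v, Λ.IsVertex v →
      {lam | Λ.deg lam = p ∧ Λ.rng lam = v}.Finite ∧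
      {lam | Λ.deg lam = p ∧ Λ.src lam = v}.Finite)

/-- Irreducibility (strong connectedness) of a `k`-graph. -/
def Irreducible (Λ : KGraph k) : Prop :=
  ∀ u v, Λ.IsVertex u → Λ.IsVertex v →
    ∃ lam, Λ.deg lam ≠ 0 ∧ Λ.rng lam = u ∧ Λ.src lam = v

/-- Primitivity of a `k`-graph. -/
def Primitive (Λ : KGraph k) : Prop :=
  ∃ p : Fin k → ℕ, p ≠ 0 ∧ ∀ u v, Λ.IsVertex u → Λ.IsVertex v →
    ∃ lam, Λ.deg lam = p ∧ Λ.rng lam = u ∧ Λ.src lam = v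

/-- The degree of a morphism, viewed in `ℤ^k`. -/
def degZ (Λ : KGraph k) (lam : Λ.Mor) : Fin k → ℤ := fun i => (Λ.deg lam i : ℤ)

/-- The number of morphisms of degree `p` with range `u` and source `v`. -/
noncomputable def count (Λ : KGraph k) (p : Fin k → ℕ) (u v : Λ.Mor) : ℕ :=
  Nat.card {lam : Λ.Mor // Λ.deg lam = p ∧ Λ.rng lam = u ∧ Λ.src lam = v}

end KGraph

/-- A two-sided infinite path in a `k`-graph: a degree-preserving functor from
the `k`-graph `Δ = {(m,n) ∈ ℤ^k × ℤ^k : m ≤ n}` to `Λ`. -/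
structure TwoSidedPath {k : ℕ} (Λ : KGraph k) where
  toFun : ∀ m n : Fin k → ℤ, m ≤ n → Λ.Mor
  deg_eq : ∀ m n (h : m ≤ n) (i : Fin k), (Λ.deg (toFun m n h) i : ℤ) = n i - m i
  src_eq : ∀ m n (h : m ≤ n), Λ.src (toFun m n h) = toFun n n le_rfl
  rng_eq : ∀ m n (h : m ≤ n), Λ.rng (toFun m n h) = toFun m m le_rfl
  comp_eq : ∀ l m n (h1 : l ≤ m) (h2 : m ≤ n),
      Λ.comp (toFun l m h1) (toFun m n h2)
        ((src_eq l m h1).trans (rng_eq m n h2).symm) = toFun l n (h1.trans h2)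

/-- A one-sided infinite path in a `k`-graph: a degree-preserving functor from
the `k`-graph `Ω = {(m,n) ∈ ℕ^k × ℕ^k : m ≤ n}` to `Λ`. -/
structure OneSidedPath {k : ℕ} (Λ : KGraph k) where
  toFun : ∀ m n : Fin k → ℕ, m ≤ n → Λ.Mor
  deg_eq : ∀ m n (h : m ≤ n) (i : Fin k), Λ.deg (toFun m n h) i = n i - m i
  src_eq : ∀ m n (h : m ≤ n), Λ.src (toFun m n h) = toFun n n le_rfl
  rng_eq : ∀ m n (h : m ≤ n), Λ.rng (toFun m n h) = toFun m m le_rfl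
  comp_eq : ∀ l m n (h1 : l ≤ m) (h2 : m ≤ n),
      Λ.comp (toFun l m h1) (toFun m n h2)
        ((src_eq l m h1).trans (rng_eq m n h2).symm) = toFun l n (h1.trans h2)

namespace TwoSidedPath

variable {k : ℕ} {Λ : KGraph k}

theorem toFun_congr (x : TwoSidedPath Λ) {m n m' n' : Fin k → ℤ}
    (hm : m = m') (hn : n = n') (h : m ≤ n) (h' : m' ≤ n') :
    x.toFun m n h = x.toFun m' n' h' := by subst hm; subst hn; rfl

/-- The vertex `x(0)` of a two-sided path. -/
def obj0 (x : TwoSidedPath Λ) : Λ.Mor := x.toFun 0 0 le_rfl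

end TwoSidedPath

theorem le_add_degZ {k : ℕ} (Λ : KGraph k) (n : Fin k → ℤ) (lam : Λ.Mor) :
    n ≤ n + Λ.degZ lam :=
  Pi.le_def.mpr fun i => by
    show n i ≤ n i + (Λ.deg lam i : ℤ); omega

/-- The cylinder set `Z(λ, n) = {x ∈ Λ^Δ : x(n, n + d(λ)) = λ}`. -/
def ZCyl {k : ℕ} (Λ : KGraph k) (lam : Λ.Mor) (n : Fin k → ℤ) :
    Set (TwoSidedPath Λ) :=
  {x | x.toFun n (n + Λ.degZ lam) (le_add_degZ Λ n lam) = lam}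

/-- The topology on `Λ^Δ` generated by the cylinder sets. -/
instance {k : ℕ} (Λ : KGraph k) : TopologicalSpace (TwoSidedPath Λ) :=
  TopologicalSpace.generateFrom {S | ∃ lam n, S = ZCyl Λ lam n}

noncomputable instance {k : ℕ} (Λ : KGraph k) : MeasurableSpace (TwoSidedPath Λ) :=
  borel _

/-- The one-sided cylinder set `Z(λ) = {x ∈ Λ^Ω : x(0, d(λ)) = λ}`. -/
def OCyl {k : ℕ} (Λ : KGraph k) (lam : Λ.Mor) : Set (OneSidedPath Λ) :=
  {x | x.toFun 0 (Λ.deg lam) (Pi.le_def.mpr fun _ => Nat.zero_le _) = lam}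

/-- The topology on `Λ^Ω` generated by the cylinder sets. -/
instance {k : ℕ} (Λ : KGraph k) : TopologicalSpace (OneSidedPath Λ) :=
  TopologicalSpace.generateFrom {S | ∃ lam, S = OCyl Λ lam}

/-- The shift `σ^n` on the two-sided path space, for `n ∈ ℤ^k`. -/
def TwoSidedPath.shift {k : ℕ} {Λ : KGraph k} (n : Fin k → ℤ)
    (x : TwoSidedPath Λ) : TwoSidedPath Λ where
  toFun l m h := x.toFun (l + n) (m + n) (add_le_add_left h n)
  deg_eq l m h i := by
    show (Λ.deg (x.toFun (l + n) (m + n) (add_le_add_left h n)) i : ℤ) = m i - l i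
    have h' := x.deg_eq (l + n) (m + n) (add_le_add_left h n) i
    simp only [Pi.add_apply] at h'
    omega
  src_eq l m h := x.src_eq (l + n) (m + n) (add_le_add_left h n)
  rng_eq l m h := x.rng_eq (l + n) (m + n) (add_le_add_left h n)
  comp_eq l m m' h1 h2 :=
    x.comp_eq (l + n) (m + n) (m' + n) (add_le_add_left h1 n) (add_le_add_left h2 n)

/-- The shift `σ^p` on the one-sided path space, for `p ∈ ℕ^k`. -/
def OneSidedPath.shift {k : ℕ} {Λ : KGraph k} (p : Fin k → ℕ)
    (x : OneSidedPath Λ) : OneSidedPath Λ where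
  toFun l m h := x.toFun (l + p) (m + p) (add_le_add_left h p)
  deg_eq l m h i := by
    show Λ.deg (x.toFun (l + p) (m + p) (add_le_add_left h p)) i = m i - l i
    have h' := x.deg_eq (l + p) (m + p) (add_le_add_left h p) i
    simp only [Pi.add_apply] at h'
    omega
  src_eq l m h := x.src_eq (l + p) (m + p) (add_le_add_left h p)
  rng_eq l m h := x.rng_eq (l + p) (m + p) (add_le_add_left h p)
  comp_eq l m m' h1 h2 :=
    x.comp_eq (l + p) (m + p) (m' + p) (add_le_add_left h1 p) (add_le_add_left h2 p)

/-- The vector `(j, …, j) ∈ ℤ^k`, i.e. `j·e` where `e = (1,…,1)`. -/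
def jvecZ (k : ℕ) (j : ℕ) : Fin k → ℤ := fun _ => (j : ℤ)

theorem neg_jvecZ_le (k j : ℕ) : -(jvecZ k j) ≤ jvecZ k j :=
  Pi.le_def.mpr fun _ => by show -((j : ℤ)) ≤ (j : ℤ); omega

/-- Coercion `ℕ^k → ℤ^k`. -/
def coeZ {k : ℕ} (p : Fin k → ℕ) : Fin k → ℤ := fun i => (p i : ℤ)

theorem coeZ_le_coeZ {k : ℕ} {m n : Fin k → ℕ} (h : m ≤ n) : coeZ m ≤ coeZ n :=
  Pi.le_def.mpr fun i => by
    show ((m i : ℤ)) ≤ (n i : ℤ)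
    exact_mod_cast Pi.le_def.mp h i

theorem neg_coeZ_le {k : ℕ} (m : Fin k → ℕ) : -(coeZ m) ≤ coeZ m :=
  Pi.le_def.mpr fun i => by show -((m i : ℤ)) ≤ (m i : ℤ); omega

/-- The quantity `h(x,y) ∈ ℕ∞`:  `0` if `x(0) ≠ y(0)`, and otherwise
`1 + sup { j : x(-je, je) = y(-je, je) }`. -/
noncomputable def hdist {k : ℕ} {Λ : KGraph k} (x y : TwoSidedPath Λ) : ℕ∞ :=
  if x.obj0 = y.obj0 then
    1 + sSup {c : ℕ∞ | ∃ j : ℕ, c = (j : ℕ∞) ∧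
        x.toFun (-(jvecZ k j)) (jvecZ k j) (neg_jvecZ_le k j) =
        y.toFun (-(jvecZ k j)) (jvecZ k j) (neg_jvecZ_le k j)}
  else 0

/-- The metric `ρ(x,y) = r^{h(x,y)}`, with `r^∞ = 0`. -/
noncomputable def rho {k : ℕ} {Λ : KGraph k} (r : ℝ) (x y : TwoSidedPath Λ) : ℝ :=
  if hdist x y = ⊤ then 0 else r ^ (hdist x y).toNat

/-- The local contracting set `E_x`. -/
def Ex {k : ℕ} {Λ : KGraph k} (x : TwoSidedPath Λ) : Set (TwoSidedPath Λ) :=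
  {y | ∀ m n (h : m ≤ n), 0 ≤ m → y.toFun m n h = x.toFun m n h}

/-- The local expanding set `F_x`. -/
def Fx {k : ℕ} {Λ : KGraph k} (x : TwoSidedPath Λ) : Set (TwoSidedPath Λ) :=
  {y | ∀ m n (h : m ≤ n), n ≤ 0 → y.toFun m n h = x.toFun m n h}

/-- The restriction map `π : Λ^Δ → Λ^Ω`. -/
def TwoSidedPath.restrict {k : ℕ} {Λ : KGraph k} (x : TwoSidedPath Λ) :
    OneSidedPath Λ where
  toFun m n h := x.toFun (coeZ m) (coeZ n) (coeZ_le_coeZ h)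
  deg_eq m n h i := by
    show Λ.deg (x.toFun (coeZ m) (coeZ n) (coeZ_le_coeZ h)) i = n i - m i
    have h' := x.deg_eq (coeZ m) (coeZ n) (coeZ_le_coeZ h) i
    simp only [coeZ] at h'
    omega
  src_eq m n h := x.src_eq (coeZ m) (coeZ n) (coeZ_le_coeZ h)
  rng_eq m n h := x.rng_eq (coeZ m) (coeZ n) (coeZ_le_coeZ h)
  comp_eq l m n h1 h2 :=
    x.comp_eq (coeZ l) (coeZ m) (coeZ n) (coeZ_le_coeZ h1) (coeZ_le_coeZ h2)

/-- Stable equivalence: `x ∼ₛ y` iff the two paths eventually agree to the right. -/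
def SRel {k : ℕ} {Λ : KGraph k} (x y : TwoSidedPath Λ) : Prop :=
  ∃ m : Fin k → ℤ, ∀ n (h : m ≤ n), x.toFun m n h = y.toFun m n h

/-- Unstable equivalence: `x ∼ᵤ y` iff the two paths eventually agree to the left. -/
def URel {k : ℕ} {Λ : KGraph k} (x y : TwoSidedPath Λ) : Prop :=
  ∃ n : Fin k → ℤ, ∀ m (h : m ≤ n), x.toFun m n h = y.toFun m n h

/-- Asymptotic equivalence: `x ∼ₐ y` iff `x ∼ₛ y` and `x ∼ᵤ y`. -/
def ARel {k : ℕ} {Λ : KGraph k} (x y : TwoSidedPath Λ) : Prop :=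
  ∃ m : Fin k → ℕ, ∀ n : Fin k → ℤ, coeZ m ≤ n →
    (∀ h : coeZ m ≤ n, x.toFun (coeZ m) n h = y.toFun (coeZ m) n h) ∧
    (∀ h' : -n ≤ -(coeZ m), x.toFun (-n) (-(coeZ m)) h' = y.toFun (-n) (-(coeZ m)) h')

/-- The groupoid `G_{s,m}` of pairs agreeing from `m ∈ ℤ^k` onwards. -/
def Gsm {k : ℕ} (Λ : KGraph k) (m : Fin k → ℤ) :
    Set (TwoSidedPath Λ × TwoSidedPath Λ) :=
  {p | ∀ n (h : m ≤ n), p.1.toFun m n h = p.2.toFun m n h}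

theorem TwoSidedPath.self_mem_cyl {k : ℕ} {Λ : KGraph k} (x : TwoSidedPath Λ)
    (m n : Fin k → ℤ) (h : m ≤ n) : x ∈ ZCyl Λ (x.toFun m n h) m := by
  show x.toFun m (m + Λ.degZ (x.toFun m n h)) _ = x.toFun m n h
  apply x.toFun_congr rfl
  funext i
  show m i + (Λ.deg (x.toFun m n h) i : ℤ) = n i
  have h' := x.deg_eq m n h i
  omega

theorem degZ_obj0 {k : ℕ} {Λ : KGraph k} (x : TwoSidedPath Λ) :
    Λ.degZ x.obj0 = 0 := by
  funext i
  show (Λ.deg (x.toFun 0 0 le_rfl) i : ℤ) = 0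
  have h' := x.deg_eq 0 0 le_rfl i
  simp only [Pi.zero_apply] at h'
  omega

theorem mem_vertex_cyl {k : ℕ} {Λ : KGraph k} {x z : TwoSidedPath Λ}
    (hz : z ∈ ZCyl Λ x.obj0 0) : z.obj0 = x.obj0 := by
  have h0 : (0 : Fin k → ℤ) = 0 + Λ.degZ x.obj0 := by rw [degZ_obj0]; simp
  calc z.obj0 = z.toFun 0 (0 + Λ.degZ x.obj0) (le_add_degZ Λ 0 x.obj0) :=
        z.toFun_congr rfl h0 le_rfl (le_add_degZ Λ 0 x.obj0)
    _ = x.obj0 := hz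


/-!
Continuity is immediate, since `π⁻¹ Z(λ) = Z(λ, 0)`. For surjectivity, (★) lets one prefix any
one-sided path `y` with an edge of degree `(1,…,1)`, i.e. `σ^(1,…,1)` is onto `Λ^Ω`; iterating
gives a sequence `y = y₀, y₁, …` with `σ^(1,…,1) yⱼ₊₁ = yⱼ`, and translating `yⱼ` back by
`j·(1,…,1)` defines a two-sided path consistently. For openness, the cylinders
`{z : z(-p, p) = x(-p, p)}` form a neighbourhood base at `x`, and a one-sided `y` with
`y(0, p) = x(0, p)` is the restriction of a two-sided path of that cylinder: extend `x(-p, 0) y`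
and translate it back by `p`.
-/

open scoped Filter Topology

namespace KGraph

variable {k : ℕ} {Λ : KGraph k}

/-- Composition as a relation, which keeps the composability proofs out of the terms. -/
def IsComp (Λ : KGraph k) (a b c : Λ.Mor) : Prop :=
  ∃ h : Λ.src a = Λ.rng b, Λ.comp a b h = c

theorem isComp_comp (a b : Λ.Mor) (h : Λ.src a = Λ.rng b) : Λ.IsComp a b (Λ.comp a b h) :=
  ⟨h, rfl⟩

theorem isComp_rng_self (a : Λ.Mor) : Λ.IsComp (Λ.rng a) a a :=
  ⟨Λ.src_obj _ (Λ.deg_rng a), Λ.id_comp a _⟩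

theorem isComp_self_src (a : Λ.Mor) : Λ.IsComp a (Λ.src a) a :=
  ⟨(Λ.rng_obj _ (Λ.deg_src a)).symm, Λ.comp_id a _⟩

theorem exists_isComp_of_deg_eq_add {c : Λ.Mor} {n₁ n₂ : Fin k → ℕ}
    (hc : Λ.deg c = n₁ + n₂) : ∃ a b, Λ.deg a = n₁ ∧ Λ.deg b = n₂ ∧ Λ.IsComp a b c := by
  obtain ⟨⟨a, b⟩, ⟨ha, hb, hab⟩, -⟩ := Λ.factor c n₁ n₂ hc
  exact ⟨a, b, ha, hb, hab⟩

namespace IsComp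

variable {a b c a' b' c' : Λ.Mor}

theorem src_eq_rng (h : Λ.IsComp a b c) : Λ.src a = Λ.rng b := h.1

theorem deg_eq (h : Λ.IsComp a b c) : Λ.deg c = Λ.deg a + Λ.deg b := by
  obtain ⟨h, rfl⟩ := h
  exact Λ.deg_comp a b h

theorem unique (h : Λ.IsComp a b c) (h' : Λ.IsComp a b c') : c = c' := by
  obtain ⟨_, rfl⟩ := h
  obtain ⟨_, rfl⟩ := h'
  rfl

theorem cancel (h : Λ.IsComp a b c) (h' : Λ.IsComp a' b' c) (hd : Λ.deg a = Λ.deg a') :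
    a = a' ∧ b = b' := by
  have hdb : Λ.deg b = Λ.deg b' := by
    have e := h.deg_eq.symm.trans h'.deg_eq
    rw [hd] at e
    exact add_left_cancel e
  obtain ⟨_, -, huniq⟩ := Λ.factor c (Λ.deg a) (Λ.deg b) h.deg_eq
  have e := (huniq (a, b) ⟨rfl, rfl, h⟩).trans (huniq (a', b') ⟨hd.symm, hdb.symm, h'⟩).symm
  exact Prod.ext_iff.mp e

theorem assoc_left {ab abc : Λ.Mor} (hab : Λ.IsComp a b ab) (habc : Λ.IsComp ab c abc) :
    ∃ bc, Λ.IsComp b c bc ∧ Λ.IsComp a bc abc := by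
  obtain ⟨h₁, rfl⟩ := hab
  obtain ⟨h₂, rfl⟩ := habc
  have h₂' : Λ.src b = Λ.rng c := (Λ.src_comp a b h₁).symm.trans h₂
  exact ⟨_, isComp_comp b c h₂', h₁.trans (Λ.rng_comp b c h₂').symm,
    (Λ.assoc a b c h₁ h₂' h₂ _).symm⟩

theorem assoc_right {bc abc : Λ.Mor} (hbc : Λ.IsComp b c bc) (habc : Λ.IsComp a bc abc) :
    ∃ ab, Λ.IsComp a b ab ∧ Λ.IsComp ab c abc := by
  obtain ⟨h₂, rfl⟩ := hbc
  obtain ⟨h₁, rfl⟩ := habc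
  have h₁' : Λ.src a = Λ.rng b := h₁.trans (Λ.rng_comp b c h₂)
  exact ⟨_, isComp_comp a b h₁', (Λ.src_comp a b h₁').trans h₂, Λ.assoc a b c h₁' h₂ _ h₁⟩

end IsComp

/-- `b = L(p, p + d(b))` in the paper's notation. -/
def IsSegment (Λ : KGraph k) (L : Λ.Mor) (p : Fin k → ℕ) (b : Λ.Mor) : Prop :=
  ∃ a c ab, Λ.deg a = p ∧ Λ.IsComp a b ab ∧ Λ.IsComp ab c L

theorem exists_isSegment {L : Λ.Mor} {p n : Fin k → ℕ} (h : p + n ≤ Λ.deg L) :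
    ∃ b, Λ.deg b = n ∧ Λ.IsSegment L p b := by
  obtain ⟨ab, c, hab, -, habc⟩ :=
    exists_isComp_of_deg_eq_add (c := L) (add_tsub_cancel_of_le h).symm
  obtain ⟨a, b, ha, hb, hab⟩ := exists_isComp_of_deg_eq_add hab
  exact ⟨b, hb, a, c, ab, ha, hab, habc⟩

theorem isSegment_self (L : Λ.Mor) : Λ.IsSegment L 0 L :=
  ⟨Λ.rng L, Λ.src L, L, Λ.deg_rng L, isComp_rng_self L, isComp_self_src L⟩

namespace IsSegment

variable {L b b' : Λ.Mor} {p q : Fin k → ℕ}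

theorem unique (h : Λ.IsSegment L p b) (h' : Λ.IsSegment L p b') (hd : Λ.deg b = Λ.deg b') :
    b = b' := by
  obtain ⟨a, c, ab, ha, hab, habc⟩ := h
  obtain ⟨a', c', ab', ha', hab', habc'⟩ := h'
  obtain ⟨rfl, -⟩ := habc.cancel habc' (by rw [hab.deg_eq, hab'.deg_eq, ha, ha', hd])
  exact (hab.cancel hab' (ha.trans ha'.symm)).2

theorem comp {b₁ b₂ : Λ.Mor} (h₁ : Λ.IsSegment L p b₁) (h₂ : Λ.IsSegment L q b₂)
    (hq : q = p + Λ.deg b₁) : ∃ b, Λ.IsComp b₁ b₂ b ∧ Λ.IsSegment L p b := by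
  obtain ⟨a, c₁, ab₁, ha, hab₁, habc₁⟩ := h₁
  obtain ⟨a', c₂, ab₂, ha', hab₂, habc₂⟩ := h₂
  obtain ⟨bc₂, hbc₂, habc₂'⟩ := hab₂.assoc_left habc₂
  obtain ⟨rfl, rfl⟩ := habc₁.cancel habc₂' (by rw [hab₁.deg_eq, ha, ha', hq])
  obtain ⟨ab₁₂, habc₁₂, hL⟩ := hbc₂.assoc_right habc₁
  obtain ⟨b, hb, hab⟩ := hab₁.assoc_left habc₁₂
  exact ⟨b, hb, a, c₂, ab₁₂, ha, hab, hL⟩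

theorem src_eq {v : Λ.Mor} (h : Λ.IsSegment L p b) (hv : Λ.IsSegment L q v)
    (hq : q = p + Λ.deg b) (hv₀ : Λ.deg v = 0) : Λ.src b = v := by
  obtain ⟨_, hbv, -⟩ := h.comp hv hq
  rw [hbv.src_eq_rng, Λ.rng_obj v hv₀]

theorem rng_eq {v : Λ.Mor} (hv : Λ.IsSegment L p v) (hv₀ : Λ.deg v = 0)
    (h : Λ.IsSegment L p b) : Λ.rng b = v := by
  obtain ⟨_, hvb, -⟩ := hv.comp h (by rw [hv₀, add_zero])
  rw [← hvb.src_eq_rng, Λ.src_obj v hv₀]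

theorem of_isComp_right {w L' : Λ.Mor} (h : Λ.IsSegment L p b) (hL : Λ.IsComp L w L') :
    Λ.IsSegment L' p b := by
  obtain ⟨a, c, ab, ha, hab, habc⟩ := h
  obtain ⟨cw, -, habcw⟩ := habc.assoc_left hL
  exact ⟨a, cw, ab, ha, hab, habcw⟩

theorem of_isComp_left {u L' : Λ.Mor} (h : Λ.IsSegment L p b) (hL : Λ.IsComp u L L') :
    Λ.IsSegment L' (Λ.deg u + p) b := by
  obtain ⟨a, c, ab, ha, hab, habc⟩ := h
  obtain ⟨uab, huab, huabc⟩ := habc.assoc_right hL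
  obtain ⟨ua, hua, huab'⟩ := hab.assoc_right huab
  exact ⟨ua, c, uab, by rw [hua.deg_eq, ha], huab', huabc⟩

end IsSegment

end KGraph

namespace OneSidedPath

variable {k : ℕ} {Λ : KGraph k}

@[ext]
theorem ext {x y : OneSidedPath Λ}
    (h : ∀ m n (hmn : m ≤ n), x.toFun m n hmn = y.toFun m n hmn) : x = y := by
  cases x; cases y
  congr
  funext m n hmn
  exact h m n hmn

theorem toFun_congr (x : OneSidedPath Λ) {m n m' n' : Fin k → ℕ}
    (hm : m = m') (hn : n = n') (h : m ≤ n) (h' : m' ≤ n') :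
    x.toFun m n h = x.toFun m' n' h' := by subst hm; subst hn; rfl

theorem deg_toFun (y : OneSidedPath Λ) (m n : Fin k → ℕ) (h : m ≤ n) :
    Λ.deg (y.toFun m n h) = n - m :=
  funext (y.deg_eq m n h)

theorem isComp_toFun (y : OneSidedPath Λ) {l m n : Fin k → ℕ} (h₁ : l ≤ m) (h₂ : m ≤ n) :
    Λ.IsComp (y.toFun l m h₁) (y.toFun m n h₂) (y.toFun l n (h₁.trans h₂)) :=
  ⟨_, y.comp_eq l m n h₁ h₂⟩

theorem isSegment_toFun (y : OneSidedPath Λ) {m n M : Fin k → ℕ} (hmn : m ≤ n) (hnM : n ≤ M) :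
    Λ.IsSegment (y.toFun 0 M zero_le) m (y.toFun m n hmn) :=
  ⟨y.toFun 0 m zero_le, y.toFun n M hnM, y.toFun 0 n _, by rw [deg_toFun, tsub_zero],
    y.isComp_toFun _ hmn, y.isComp_toFun _ hnM⟩

section Prepend

variable {ν : Λ.Mor} {y : OneSidedPath Λ}

theorem add_tsub_le_deg_comp_toFun {m n : Fin k → ℕ} (hmn : m ≤ n)
    (h : Λ.src ν = Λ.rng (y.toFun 0 n zero_le)) :
    m + (n - m) ≤ Λ.deg (Λ.comp ν (y.toFun 0 n zero_le) h) := by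
  rw [Λ.deg_comp, deg_toFun, add_tsub_cancel_of_le hmn, tsub_zero]
  exact le_add_self

/-- `(ν y)(m, n)`, read off as a segment of `ν · y(0, n)`. -/
noncomputable def prependFun (hν : Λ.src ν = y.toFun 0 0 le_rfl) (m n : Fin k → ℕ)
    (hmn : m ≤ n) : Λ.Mor :=
  (KGraph.exists_isSegment
    (add_tsub_le_deg_comp_toFun hmn (hν.trans (y.rng_eq _ _ _).symm))).choose

variable (hν : Λ.src ν = y.toFun 0 0 le_rfl)

theorem prependFun_spec {m n : Fin k → ℕ} (hmn : m ≤ n) :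
    Λ.deg (prependFun hν m n hmn) = n - m ∧
      Λ.IsSegment (Λ.comp ν (y.toFun 0 n zero_le) (hν.trans (y.rng_eq _ _ _).symm)) m
        (prependFun hν m n hmn) :=
  (KGraph.exists_isSegment (add_tsub_le_deg_comp_toFun hmn _)).choose_spec

theorem isSegment_prependFun {m n M : Fin k → ℕ} (hmn : m ≤ n) (hnM : n ≤ M) {L : Λ.Mor}
    (hL : Λ.IsComp ν (y.toFun 0 M zero_le) L) : Λ.IsSegment L m (prependFun hν m n hmn) := by
  obtain ⟨L', hL', hL'L⟩ := (y.isComp_toFun zero_le hnM).assoc_right hL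
  obtain rfl := hL'.unique (KGraph.isComp_comp _ _ (hν.trans (y.rng_eq _ _ _).symm))
  exact (prependFun_spec hν hmn).2.of_isComp_right hL'L

noncomputable def prepend : OneSidedPath Λ where
  toFun := prependFun hν
  deg_eq m n hmn := congrFun (prependFun_spec hν hmn).1
  src_eq m n hmn := by
    refine (prependFun_spec hν hmn).2.src_eq (isSegment_prependFun hν le_rfl le_rfl
      (KGraph.isComp_comp _ _ _)) ?_ ?_
    · rw [(prependFun_spec hν hmn).1, add_tsub_cancel_of_le hmn]
    · rw [(prependFun_spec hν le_rfl).1, tsub_self]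
  rng_eq m n hmn := by
    refine KGraph.IsSegment.rng_eq (isSegment_prependFun hν le_rfl hmn
      (KGraph.isComp_comp _ _ _)) ?_ (prependFun_spec hν hmn).2
    rw [(prependFun_spec hν le_rfl).1, tsub_self]
  comp_eq l m n h₁ h₂ := by
    have hL := KGraph.isComp_comp ν (y.toFun 0 n zero_le) (hν.trans (y.rng_eq _ _ _).symm)
    obtain ⟨b, hb, hbL⟩ := (isSegment_prependFun hν h₁ h₂ hL).comp
      (prependFun_spec hν h₂).2 (by rw [(prependFun_spec hν h₁).1, add_tsub_cancel_of_le h₁])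
    refine hb.2.trans (hbL.unique (prependFun_spec hν (h₁.trans h₂)).2 ?_)
    rw [hb.deg_eq, (prependFun_spec hν h₁).1, (prependFun_spec hν h₂).1,
      (prependFun_spec hν (h₁.trans h₂)).1, add_comm, tsub_add_tsub_cancel h₂ h₁]

theorem shift_prepend : (prepend hν).shift (Λ.deg ν) = y := by
  ext m n hmn
  have hL := KGraph.isComp_comp ν (y.toFun 0 (n + Λ.deg ν) zero_le) (hν.trans (y.rng_eq _ _ _).symm)
  have hy := (y.isSegment_toFun hmn le_self_add).of_isComp_left hL
  rw [add_comm (Λ.deg ν) m] at hy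
  refine (isSegment_prependFun hν (add_le_add hmn le_rfl) le_rfl hL).unique hy ?_
  rw [(prependFun_spec hν _).1, deg_toFun, add_tsub_add_eq_tsub_right]

theorem prepend_toFun_zero_deg : (prepend hν).toFun 0 (Λ.deg ν) zero_le = ν := by
  have hL := KGraph.isComp_comp ν (y.toFun 0 (Λ.deg ν) zero_le) (hν.trans (y.rng_eq _ _ _).symm)
  refine (isSegment_prependFun hν zero_le le_rfl hL).unique
    ((KGraph.isSegment_self ν).of_isComp_right hL) ?_
  rw [(prependFun_spec hν _).1, tsub_zero]

end Prepend

theorem shift_surjective {p : Fin k → ℕ}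
    (h : ∀ v, Λ.IsVertex v → ∃ lam, Λ.deg lam = p ∧ Λ.src lam = v) :
    Function.Surjective (shift p : OneSidedPath Λ → OneSidedPath Λ) := by
  intro y
  obtain ⟨ν, rfl, hν⟩ := h _ ((y.deg_toFun 0 0 le_rfl).trans (tsub_self 0))
  exact ⟨prepend hν, shift_prepend hν⟩

end OneSidedPath

namespace TwoSidedPath

variable {k : ℕ} {Λ : KGraph k}

theorem isComp_toFun (x : TwoSidedPath Λ) {l m n : Fin k → ℤ} (h₁ : l ≤ m) (h₂ : m ≤ n) :
    Λ.IsComp (x.toFun l m h₁) (x.toFun m n h₂) (x.toFun l n (h₁.trans h₂)) :=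
  ⟨_, x.comp_eq l m n h₁ h₂⟩

theorem deg_toFun_eq (x z : TwoSidedPath Λ) {m n : Fin k → ℤ} (h : m ≤ n) :
    Λ.deg (z.toFun m n h) = Λ.deg (x.toFun m n h) :=
  funext fun i => by
    have hz := z.deg_eq m n h i
    have hx := x.deg_eq m n h i
    omega

theorem toFun_eq_of_toFun_eq {x z : TwoSidedPath Λ} {a b m n : Fin k → ℤ} (ham : a ≤ m)
    (hmn : m ≤ n) (hnb : n ≤ b) (h : z.toFun a b (ham.trans (hmn.trans hnb)) =
      x.toFun a b (ham.trans (hmn.trans hnb))) :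
    z.toFun m n hmn = x.toFun m n hmn := by
  have hmb := hmn.trans hnb
  have hx : Λ.IsComp (x.toFun a m ham) (x.toFun m b hmb) (z.toFun a b (ham.trans hmb)) := by
    rw [h]; exact x.isComp_toFun ham hmb
  obtain ⟨-, hzx⟩ := (z.isComp_toFun ham hmb).cancel hx (deg_toFun_eq x z ham)
  have hx' : Λ.IsComp (x.toFun m n hmn) (x.toFun n b hnb) (z.toFun m b hmb) := by
    rw [hzx]; exact x.isComp_toFun hmn hnb
  exact ((z.isComp_toFun hmn hnb).cancel hx' (deg_toFun_eq x z hmn)).1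

/-- Translation by `j·(1,…,1)`, truncated at `0` in coordinates below `-j`. -/
def liftIdx (j : ℕ) (m : Fin k → ℤ) : Fin k → ℕ := fun i => (m i + j).toNat

theorem liftIdx_mono {j : ℕ} {m n : Fin k → ℤ} (h : m ≤ n) : liftIdx j m ≤ liftIdx j n :=
  fun i => by
    have : m i ≤ n i := h i
    simp only [liftIdx]
    omega

def depth (m : Fin k → ℤ) : ℕ := Finset.univ.sup fun i => (-m i).toNat

theorem neg_depth_le (m : Fin k → ℤ) (i : Fin k) : -(depth m : ℤ) ≤ m i := by
  have : (-m i).toNat ≤ depth m := Finset.le_sup (f := fun i => (-m i).toNat) (Finset.mem_univ i)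
  omega

section ShiftCompatible

variable {ys : ℕ → OneSidedPath Λ}

def limitFun (ys : ℕ → OneSidedPath Λ) (j : ℕ) (m n : Fin k → ℤ) (h : m ≤ n) : Λ.Mor :=
  (ys j).toFun (liftIdx j m) (liftIdx j n) (liftIdx_mono h)

theorem deg_limitFun {j : ℕ} {m n : Fin k → ℤ} (h : m ≤ n) (hj : ∀ i, -(j : ℤ) ≤ m i)
    (i : Fin k) : (Λ.deg (limitFun ys j m n h) i : ℤ) = n i - m i := by
  have hd := (ys j).deg_eq _ _ (liftIdx_mono (j := j) h) i
  have hmn : m i ≤ n i := h i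
  have hmj := hj i
  simp only [liftIdx] at hd
  simp only [limitFun, hd]
  omega

variable (hys : ∀ j, (ys (j + 1)).shift 1 = ys j)
include hys

theorem limitFun_succ {j : ℕ} {m n : Fin k → ℤ} (h : m ≤ n) (hj : ∀ i, -(j : ℤ) ≤ m i) :
    limitFun ys (j + 1) m n h = limitFun ys j m n h := by
  have hlift : ∀ l : Fin k → ℤ, m ≤ l → liftIdx (j + 1) l = liftIdx j l + 1 :=
    fun l hl => funext fun i => by
      have : m i ≤ l i := hl i
      have := hj i
      simp only [liftIdx, Pi.add_apply, Pi.one_apply]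
      omega
  rw [limitFun, limitFun, ← hys j]
  exact OneSidedPath.toFun_congr _ (hlift m le_rfl) (hlift n h) _ _

theorem limitFun_eq {j j' : ℕ} {m n : Fin k → ℤ} (h : m ≤ n) (hj : ∀ i, -(j : ℤ) ≤ m i)
    (hj' : ∀ i, -(j' : ℤ) ≤ m i) : limitFun ys j m n h = limitFun ys j' m n h := by
  have stable : ∀ j : ℕ, (∀ i, -(j : ℤ) ≤ m i) → ∀ j', j ≤ j' →
      limitFun ys j' m n h = limitFun ys j m n h := by
    intro j hj j' hjj'
    induction j', hjj' using Nat.le_induction with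
    | base => rfl
    | succ j' hjj' ih =>
      refine (limitFun_succ hys h fun i => ?_).trans ih
      have := hj i
      omega
  exact (stable j hj _ (le_max_left j j')).symm.trans (stable j' hj' _ (le_max_right j j'))

/-- The inverse limit of `ys` under `σ^(1,…,1)`: its translate by `j·(1,…,1)` restricts to
`ys j`. -/
def ofShiftCompatible : TwoSidedPath Λ where
  toFun m n h := limitFun ys (depth m) m n h
  deg_eq m n h := deg_limitFun h (neg_depth_le m)
  src_eq m n h := ((ys _).src_eq _ _ _).trans
    (limitFun_eq hys le_rfl (fun i => (neg_depth_le m i).trans (h i)) (neg_depth_le n))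
  rng_eq m n h := (ys _).rng_eq _ _ _
  comp_eq l m n h₁ h₂ := by
    have hc := (ys (depth l)).isComp_toFun (liftIdx_mono (j := depth l) h₁) (liftIdx_mono h₂)
    rw [show (ys (depth l)).toFun _ _ (liftIdx_mono h₂) = limitFun ys (depth m) m n h₂ from
      limitFun_eq hys h₂ (fun i => (neg_depth_le l i).trans (h₁ i)) (neg_depth_le m)] at hc
    obtain ⟨_, hc⟩ := hc
    exact hc

theorem restrict_ofShiftCompatible : (ofShiftCompatible hys).restrict = ys 0 := by
  ext m n h
  refine (limitFun_eq hys (coeZ_le_coeZ h) (neg_depth_le _) fun i => ?_).trans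
    (OneSidedPath.toFun_congr _ ?_ ?_ (liftIdx_mono (coeZ_le_coeZ h)) _)
  · simp [coeZ]
  · funext i; simp [liftIdx, coeZ]
  · funext i; simp [liftIdx, coeZ]

end ShiftCompatible

theorem restrict_surjective_of_shift_surjective
    (h : Function.Surjective (OneSidedPath.shift 1 : OneSidedPath Λ → OneSidedPath Λ)) :
    Function.Surjective (restrict : TwoSidedPath Λ → OneSidedPath Λ) := by
  intro y
  choose g hg using h
  exact ⟨ofShiftCompatible (ys := fun j => g^[j] y)
    (fun j => by rw [Function.iterate_succ_apply']; exact hg _), restrict_ofShiftCompatible _⟩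

end TwoSidedPath

theorem OneSidedPath.mem_OCyl_toFun_iff {k : ℕ} {Λ : KGraph k} {x y : OneSidedPath Λ}
    {p : Fin k → ℕ} :
    y ∈ OCyl Λ (x.toFun 0 p zero_le) ↔ y.toFun 0 p zero_le = x.toFun 0 p zero_le := by
  show y.toFun 0 _ _ = _ ↔ _
  rw [y.toFun_congr rfl ((x.deg_toFun 0 p zero_le).trans (tsub_zero p)) _ zero_le]

theorem coeZ_zero {k : ℕ} : coeZ (0 : Fin k → ℕ) = 0 :=
  funext fun i => by simp [coeZ]

theorem neg_coeZ_nonpos {k : ℕ} (p : Fin k → ℕ) : -coeZ p ≤ 0 :=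
  fun i => by simp [coeZ]

namespace TwoSidedPath

variable {k : ℕ} {Λ : KGraph k}

theorem restrict_shift (p : Fin k → ℕ) (x : TwoSidedPath Λ) :
    (x.shift (coeZ p)).restrict = x.restrict.shift p := by
  ext m n h
  exact x.toFun_congr (funext fun i => by simp [coeZ]) (funext fun i => by simp [coeZ]) _ _

theorem restrict_preimage_OCyl (lam : Λ.Mor) :
    restrict ⁻¹' OCyl Λ lam = ZCyl Λ lam 0 := by
  ext x
  exact iff_of_eq (congrArg (· = lam) (x.toFun_congr (funext fun i => by simp [coeZ])
    (funext fun i => by simp [coeZ, KGraph.degZ]) _ _))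

theorem continuous_restrict : Continuous (restrict : TwoSidedPath Λ → OneSidedPath Λ) := by
  refine continuous_generateFrom_iff.mpr ?_
  rintro _ ⟨lam, rfl⟩
  rw [restrict_preimage_OCyl]
  exact TopologicalSpace.isOpen_generateFrom_of_mem ⟨lam, 0, rfl⟩

/-- Extend the concatenation `ν y` and translate back by `d(ν)`. -/
theorem exists_restrict_eq_toFun_eq
    (hsurj : Function.Surjective (restrict : TwoSidedPath Λ → OneSidedPath Λ))
    {ν : Λ.Mor} {y : OneSidedPath Λ} (hν : Λ.src ν = y.toFun 0 0 le_rfl) :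
    ∃ z : TwoSidedPath Λ, z.restrict = y ∧ z.toFun (-coeZ (Λ.deg ν)) 0 (neg_coeZ_nonpos _) = ν := by
  obtain ⟨z, hz⟩ := hsurj (OneSidedPath.prepend hν)
  refine ⟨z.shift (coeZ (Λ.deg ν)), by rw [restrict_shift, hz, OneSidedPath.shift_prepend], ?_⟩
  calc (z.shift (coeZ (Λ.deg ν))).toFun (-coeZ (Λ.deg ν)) 0 _
      = z.restrict.toFun 0 (Λ.deg ν) zero_le :=
        z.toFun_congr (funext fun i => by simp [coeZ]) (funext fun i => by simp [coeZ]) _ _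
    _ = ν := by rw [hz]; exact OneSidedPath.prepend_toFun_zero_deg hν

def centralCyl (x : TwoSidedPath Λ) (p : Fin k → ℕ) : Set (TwoSidedPath Λ) :=
  {z | z.toFun (-coeZ p) (coeZ p) (neg_coeZ_le p) = x.toFun (-coeZ p) (coeZ p) (neg_coeZ_le p)}

theorem centralCyl_antitone (x : TwoSidedPath Λ) : Antitone x.centralCyl :=
  fun p _ hpq _ hz => toFun_eq_of_toFun_eq (neg_le_neg (coeZ_le_coeZ hpq)) (neg_coeZ_le p)
    (coeZ_le_coeZ hpq) hz

theorem exists_centralCyl_subset_ZCyl {x : TwoSidedPath Λ} {lam : Λ.Mor} {n : Fin k → ℤ}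
    (hx : x ∈ ZCyl Λ lam n) : ∃ p, x.centralCyl p ⊆ ZCyl Λ lam n := by
  refine ⟨fun i => max (-n i).toNat (n i + Λ.deg lam i).toNat, fun z hz => ?_⟩
  have hleft : -coeZ (fun i => max (-n i).toNat (n i + Λ.deg lam i).toNat) ≤ n :=
    fun i => by simp only [coeZ, Pi.neg_apply]; omega
  have hright : n + Λ.degZ lam ≤ coeZ (fun i => max (-n i).toNat (n i + Λ.deg lam i).toNat) :=
    fun i => by simp only [coeZ, KGraph.degZ, Pi.add_apply]; omega
  exact (toFun_eq_of_toFun_eq hleft (le_add_degZ Λ n lam) hright hz).trans hx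

theorem exists_centralCyl_subset_of_mem_nhds {x : TwoSidedPath Λ} {U : Set (TwoSidedPath Λ)}
    (hU : U ∈ 𝓝 x) : ∃ p, x.centralCyl p ⊆ U := by
  have hle : (⨅ p, 𝓟 (x.centralCyl p)) ≤ 𝓝 x := by
    rw [TopologicalSpace.nhds_generateFrom]
    refine le_iInf₂ ?_
    rintro _ ⟨hxS, lam, n, rfl⟩
    obtain ⟨p, hp⟩ := exists_centralCyl_subset_ZCyl hxS
    exact iInf_le_of_le p (Filter.principal_mono.2 hp)
  exact (Filter.mem_iInf_of_directed
    (Filter.monotone_principal.comp_antitone x.centralCyl_antitone).directed_ge U).1 (hle hU)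

theorem OCyl_subset_image_centralCyl
    (hsurj : Function.Surjective (restrict : TwoSidedPath Λ → OneSidedPath Λ))
    (x : TwoSidedPath Λ) (p : Fin k → ℕ) :
    OCyl Λ (x.restrict.toFun 0 p zero_le) ⊆ restrict '' x.centralCyl p := by
  intro y hy
  rw [OneSidedPath.mem_OCyl_toFun_iff] at hy
  have h₀ : -coeZ p ≤ coeZ 0 := coeZ_zero ▸ neg_coeZ_nonpos p
  have hdeg : Λ.deg (x.toFun (-coeZ p) (coeZ 0) h₀) = p := funext fun i => by
    have := x.deg_eq (-coeZ p) (coeZ 0) h₀ i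
    simp only [coeZ, Pi.neg_apply, Pi.zero_apply, Nat.cast_zero] at this
    omega
  have hν : Λ.src (x.toFun (-coeZ p) (coeZ 0) h₀) = y.toFun 0 0 le_rfl :=
    calc Λ.src (x.toFun (-coeZ p) (coeZ 0) h₀) = Λ.rng (x.restrict.toFun 0 p zero_le) :=
          (x.src_eq _ _ _).trans (x.rng_eq _ _ _).symm
      _ = Λ.rng (y.toFun 0 p zero_le) := by rw [hy]
      _ = y.toFun 0 0 le_rfl := y.rng_eq _ _ _
  obtain ⟨z, rfl, hz⟩ := exists_restrict_eq_toFun_eq hsurj hν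
  refine ⟨z, ?_, rfl⟩
  have hpast : z.toFun (-coeZ p) (coeZ 0) h₀ = x.toFun (-coeZ p) (coeZ 0) h₀ :=
    (z.toFun_congr (by rw [hdeg]) coeZ_zero _ _).trans hz
  have hzx := z.isComp_toFun h₀ (coeZ_le_coeZ (zero_le (a := p)))
  rw [hpast, show z.toFun (coeZ 0) (coeZ p) _ = x.toFun (coeZ 0) (coeZ p) _ from hy] at hzx
  exact hzx.unique (x.isComp_toFun h₀ _)

theorem isOpenMap_restrict
    (hsurj : Function.Surjective (restrict : TwoSidedPath Λ → OneSidedPath Λ)) :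
    IsOpenMap (restrict : TwoSidedPath Λ → OneSidedPath Λ) := by
  refine IsOpenMap.of_nhds_le fun x V hV => ?_
  obtain ⟨p, hp⟩ := exists_centralCyl_subset_of_mem_nhds (Filter.mem_map.1 hV)
  have hopen : IsOpen (OCyl Λ (x.restrict.toFun 0 p zero_le)) :=
    TopologicalSpace.isOpen_generateFrom_of_mem ⟨_, rfl⟩
  refine Filter.mem_of_superset (hopen.mem_nhds (OneSidedPath.mem_OCyl_toFun_iff.2 rfl)) ?_
  calc OCyl Λ (x.restrict.toFun 0 p zero_le) ⊆ restrict '' x.centralCyl p :=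
        OCyl_subset_image_centralCyl hsurj x p
    _ ⊆ restrict '' (restrict ⁻¹' V) := Set.image_mono hp
    _ ⊆ V := Set.image_preimage_subset _ _

end TwoSidedPath

theorem restrict_continuous_open_surjective_general {k : ℕ}
    (Λ : KGraph k) (hstar : Λ.Star) :
    Continuous (TwoSidedPath.restrict : TwoSidedPath Λ → OneSidedPath Λ) ∧
    IsOpenMap (TwoSidedPath.restrict : TwoSidedPath Λ → OneSidedPath Λ) ∧
    Function.Surjective (TwoSidedPath.restrict : TwoSidedPath Λ → OneSidedPath Λ) ∧
    (∀ (p : Fin k → ℕ) (x : TwoSidedPath Λ),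
      (TwoSidedPath.shift (coeZ p) x).restrict =
        OneSidedPath.shift p x.restrict) := by
  have hsurj : Function.Surjective (TwoSidedPath.restrict : TwoSidedPath Λ → OneSidedPath Λ) :=
    TwoSidedPath.restrict_surjective_of_shift_surjective
      (OneSidedPath.shift_surjective fun v hv => ((hstar 1).1 v hv).2)
  exact ⟨TwoSidedPath.continuous_restrict, TwoSidedPath.isOpenMap_restrict hsurj, hsurj,
    TwoSidedPath.restrict_shift⟩

/-- The restriction map `π : Λ^Δ → Λ^Ω` is a continuous open
surjection intertwining the shifts: `π ∘ σ^p = σ^p ∘ π` for `p ∈ ℕ^k`. -/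
theorem restrict_continuous_open_surjective {k : ℕ} (hk : 0 < k)
    (Λ : KGraph k) (hstar : Λ.Star) :
    Continuous (TwoSidedPath.restrict : TwoSidedPath Λ → OneSidedPath Λ) ∧
    IsOpenMap (TwoSidedPath.restrict : TwoSidedPath Λ → OneSidedPath Λ) ∧
    Function.Surjective (TwoSidedPath.restrict : TwoSidedPath Λ → OneSidedPath Λ) ∧
    (∀ (p : Fin k → ℕ) (x : TwoSidedPath Λ),
      (TwoSidedPath.shift (coeZ p) x).restrict =
        OneSidedPath.shift p x.restrict) :=
  restrict_continuous_open_surjective_general Λ hstar
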